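/- arXiv:1907.06855 — 8 statements merged into one kernel-verified Lean document; each statement's English description precedes it below -/
import Mathlib

section
/- The sizes of the broadcast redistribution majorize the original sizes: if T_1, ..., T_{d+1} is the broadcast redistribution of finsets v_0, ..., v_d, then for every r ∈ {1,...,d+1} and every subset S ⊆ {0,...,d} with |S| = r, one has Σ_{j∈S} |v_j| ≤ Σ_{u=1}^{r} |T_u|. -/
/-!
Count incidences `c ∈ v j` choice by choice. A choice `c` contributes to `∑_{j ∈ S} |v_j|`
at most `min (|S|, n_c)` times, and it contributes exactly `min (r, n_c)` to
`∑_{u=1}^{r} |T_u|`, since it lies in `T_u` precisely for `u ≤ n_c`.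
-/

open Finset

theorem Finset.sum_card_eq_sum_card_filter_mem {α β : Type*} [Fintype β] [DecidableEq β]
    (B : α → Finset β) (s : Finset α) :
    ∑ j ∈ s, #(B j) = ∑ x, #{j ∈ s | x ∈ B j} := by
  simpa [bipartiteAbove, bipartiteBelow] using
    sum_card_bipartiteAbove_eq_sum_card_bipartiteBelow (fun j x => x ∈ B j) (s := s)
      (t := univ)

theorem Nat.card_filter_Icc_one_le (r m : ℕ) : #{u ∈ Icc 1 r | u ≤ m} = min r m := by
  have : {u ∈ Icc 1 r | u ≤ m} = Icc 1 (min r m) := by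
    ext u
    simp only [mem_filter, mem_Icc, le_min_iff]
    tauto
  rw [this, Nat.card_Icc, Nat.add_sub_cancel]

theorem Finset.sum_card_filter_le_Icc_one {α : Type*} [Fintype α] (f : α → ℕ) (r : ℕ) :
    ∑ u ∈ Icc 1 r, #{c | u ≤ f c} = ∑ c, min r (f c) := by
  classical
  rw [sum_card_eq_sum_card_filter_mem]
  simp only [mem_filter, mem_univ, true_and, Nat.card_filter_Icc_one_le]

/-- The sizes of the broadcast redistribution majorize the original
sizes: for every `r ∈ {1, …, d+1}` and every subset `S` of the indices with
`|S| = r`, one has `∑_{j ∈ S} |v j| ≤ ∑_{u=1}^{r} |T u|`. -/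
theorem broadcast_redistribution_majorizes
    {C : Type*} [Fintype C] [DecidableEq C] (d : ℕ)
    (v : Fin (d + 1) → Finset C)
    (n : C → ℕ)
    (hn : ∀ c, n c = (Finset.univ.filter (fun j => c ∈ v j)).card)
    (T : ℕ → Finset C)
    (hT : ∀ u, T u = Finset.univ.filter (fun c => u ≤ n c)) :
    ∀ r, 1 ≤ r → r ≤ d + 1 → ∀ S : Finset (Fin (d + 1)), S.card = r →
      ∑ j ∈ S, (v j).card ≤ ∑ u ∈ Finset.Icc 1 r, (T u).card := by
  rintro r - - S rfl
  simp only [hT]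
  rw [sum_card_filter_le_Icc_one, sum_card_eq_sum_card_filter_mem]
  refine sum_le_sum fun c _ => le_min (card_filter_le _ _) ?_
  rw [hn]
  exact card_le_card (filter_subset_filter _ (subset_univ S))
end

section
/- A broadcast interaction does not increase the Lyapunov function V(C) = nK² − Σ_i |v_i|²: if T_1, ..., T_{d+1} is the broadcast redistribution of finsets v_0, ..., v_d, then Σ_{u=1}^{d+1} |T_u|² ≥ Σ_{j=0}^{d} |v_j|². -/
/-!
Count ordered pairs: `∑ⱼ |vⱼ|² = ∑_{c,c'} #{j | c, c' ∈ vⱼ} ≤ ∑_{c,c'} min (n c) (n c')`.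
The sets `T u` are nested threshold sets of `n`, so the same count for them gives exactly
`#{u ≤ d + 1 | u ≤ min (n c) (n c')} = min (n c) (n c')`: the bound is attained.
-/

open Finset

theorem Finset.sum_card_sq_eq_sum_sum_card_filter_mem {ι α : Type*} [Fintype α] [DecidableEq α]
    (s : Finset ι) (v : ι → Finset α) :
    ∑ i ∈ s, #(v i) ^ 2 = ∑ a, ∑ b, #{i ∈ s | a ∈ v i ∧ b ∈ v i} := by
  have card_eq (t : Finset α) : #t = ∑ a, if a ∈ t then 1 else 0 := by
    simp
  simp_rw [sq, card_eq, sum_mul_sum, card_filter]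
  rw [sum_comm]
  refine sum_congr rfl fun a _ => ?_
  rw [sum_comm]
  refine sum_congr rfl fun b _ => sum_congr rfl fun i _ => ?_
  simp only [ite_zero_mul_ite_zero, mul_one]

theorem Finset.card_filter_mem_and_mem_le_min {ι α : Type*} [DecidableEq α]
    (s : Finset ι) (v : ι → Finset α) (a b : α) :
    #{i ∈ s | a ∈ v i ∧ b ∈ v i} ≤ min #{i ∈ s | a ∈ v i} #{i ∈ s | b ∈ v i} :=
  le_min (card_le_card <| monotone_filter_right _ fun _ _ => And.left)
    (card_le_card <| monotone_filter_right _ fun _ _ => And.right)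

theorem Finset.card_Icc_one_filter_le {k N : ℕ} (hk : k ≤ N) :
    #{u ∈ Icc 1 N | u ≤ k} = k := by
  have : {u ∈ Icc 1 N | u ≤ k} = Icc 1 k := by
    ext u
    simp only [mem_filter, mem_Icc]
    omega
  rw [this, Nat.card_Icc, Nat.add_sub_cancel]

/-- A broadcast interaction does not increase the Lyapunov function
`V(C) = nK² − ∑ᵢ |vᵢ|²`, i.e. `∑_{u=1}^{d+1} |T u|² ≥ ∑_{j=0}^{d} |v j|²`. -/
theorem broadcast_redistribution_lyapunov_nonincreasing
    {C : Type*} [Fintype C] [DecidableEq C] (d : ℕ)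
    (v : Fin (d + 1) → Finset C)
    (n : C → ℕ)
    (hn : ∀ c, n c = (Finset.univ.filter (fun j => c ∈ v j)).card)
    (T : ℕ → Finset C)
    (hT : ∀ u, T u = Finset.univ.filter (fun c => u ≤ n c)) :
    ∑ j : Fin (d + 1), (v j).card ^ 2 ≤ ∑ u ∈ Finset.Icc 1 (d + 1), (T u).card ^ 2 := by
  have n_le (c : C) : n c ≤ d + 1 := by
    simpa [hn c] using card_filter_le (univ : Finset (Fin (d + 1))) (c ∈ v ·)
  calc ∑ j, #(v j) ^ 2
      = ∑ c, ∑ c', #{j | c ∈ v j ∧ c' ∈ v j} := sum_card_sq_eq_sum_sum_card_filter_mem _ v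
    _ ≤ ∑ c, ∑ c', min (n c) (n c') := by
      gcongr with c _ c' _
      rw [hn c, hn c']
      exact card_filter_mem_and_mem_le_min _ v c c'
    _ = ∑ c, ∑ c', #{u ∈ Icc 1 (d + 1) | c ∈ T u ∧ c' ∈ T u} := by
      refine sum_congr rfl fun c _ => sum_congr rfl fun c' _ => ?_
      simp only [hT, mem_filter, mem_univ, true_and, ← le_min_iff]
      exact (card_Icc_one_filter_le (min_le_of_left_le (n_le c))).symm
    _ = ∑ u ∈ Icc 1 (d + 1), #(T u) ^ 2 := (sum_card_sq_eq_sum_sum_card_filter_mem _ T).symm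
end

section
/- A broadcast interaction at a non-stable collection strictly decreases the Lyapunov function: if T_1, ..., T_{d+1} is the broadcast redistribution of finsets v_0, ..., v_d, and there exist indices i, j such that v_i ⊄ v_j and v_j ⊄ v_i (i.e., the original collection is not stable/not a chain under inclusion), then Σ_{u=1}^{d+1} |T_u|² > Σ_{j=0}^{d} |v_j|². -/
/-! Count ordered pairs of choices. `∑ⱼ |vⱼ|²` counts triples `(j, c, c')` with `c, c' ∈ vⱼ`,
and `∑ᵤ |Tᵤ|²` counts triples `(u, c, c')` with `u ≤ min (n c) (n c')`. So for each pair the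
left side contributes the number of sets containing both choices, the right side the smaller of
their two multiplicities. The first never exceeds the second, and it falls short for a pair
`c ∈ vᵢ \ vⱼ`, `c' ∈ vⱼ \ vᵢ`: the set `vᵢ` contains `c` but not `c'`, and `vⱼ` the reverse. -/

open Finset

namespace Finset

theorem sum_card_filter_le_eq_sum {α : Type*} (s : Finset α) (f : α → ℕ) {N : ℕ}
    (hf : ∀ a ∈ s, f a ≤ N) :
    ∑ u ∈ Icc 1 N, #{a ∈ s | u ≤ f a} = ∑ a ∈ s, f a := by
  simp only [card_filter]
  rw [sum_comm]
  refine sum_congr rfl fun a ha => ?_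
  rw [← card_filter]
  have hfilter : {u ∈ Icc 1 N | u ≤ f a} = Icc 1 (f a) := by
    ext u
    simp only [mem_filter, mem_Icc]
    have := hf a ha
    omega
  rw [hfilter, Nat.card_Icc, Nat.add_sub_cancel]

theorem card_filter_and_le_min {α : Type*} (s : Finset α) (p q : α → Prop)
    [DecidablePred p] [DecidablePred q] :
    #{a ∈ s | p a ∧ q a} ≤ min #{a ∈ s | p a} #{a ∈ s | q a} :=
  le_min (card_le_card fun _ ha => by simp_all) (card_le_card fun _ ha => by simp_all)

end Finset

section CoOccurrence

variable {ι C : Type*} [Fintype ι] [DecidableEq C] (v : ι → Finset C)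

theorem sum_card_sq_eq_sum_card_filter_mem_and_mem [Fintype C] :
    ∑ k, #(v k) ^ 2 = ∑ p : C × C, #{k | p.1 ∈ v k ∧ p.2 ∈ v k} := by
  have := sum_card_bipartiteAbove_eq_sum_card_bipartiteBelow (s := univ) (t := univ)
    fun k (p : C × C) => p.1 ∈ v k ∧ p.2 ∈ v k
  simp only [bipartiteAbove, bipartiteBelow] at this
  rw [← this]
  refine sum_congr rfl fun k _ => ?_
  rw [sq, ← card_product]
  congr 1
  ext p
  simp

theorem card_filter_mem_and_mem_lt_min {i j : ι} {a b : C} (hai : a ∈ v i) (hbi : b ∉ v i)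
    (hbj : b ∈ v j) (haj : a ∉ v j) :
    #{k | a ∈ v k ∧ b ∈ v k} < min #{k | a ∈ v k} #{k | b ∈ v k} := by
  refine lt_min (card_lt_card ?_) (card_lt_card ?_)
  · rw [← filter_filter, filter_ssubset]
    exact ⟨i, by simpa using hai, hbi⟩
  · simp_rw [and_comm (a := a ∈ _)]
    rw [← filter_filter, filter_ssubset]
    exact ⟨j, by simpa using hbj, haj⟩

end CoOccurrence

theorem card_sq_filter_le_eq_card_filter_le_min {C : Type*} [Fintype C] [DecidableEq C]
    (n : C → ℕ) (u : ℕ) :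
    #{c | u ≤ n c} ^ 2 = #{p : C × C | u ≤ min (n p.1) (n p.2)} := by
  simp only [sq, ← card_product, ← filter_product, univ_product_univ, le_min_iff]

/-- A broadcast interaction at a non-stable collection strictly
decreases the Lyapunov function: if some two of the original value sets are
incomparable under inclusion, then `∑_{u=1}^{d+1} |T u|² > ∑_{j=0}^{d} |v j|²`. -/
theorem broadcast_redistribution_lyapunov_strict_decrease
    {C : Type*} [Fintype C] [DecidableEq C] (d : ℕ)
    (v : Fin (d + 1) → Finset C)
    (n : C → ℕ)
    (hn : ∀ c, n c = (Finset.univ.filter (fun j => c ∈ v j)).card)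
    (T : ℕ → Finset C)
    (hT : ∀ u, T u = Finset.univ.filter (fun c => u ≤ n c))
    (hunstable : ∃ i j : Fin (d + 1), ¬ v i ⊆ v j ∧ ¬ v j ⊆ v i) :
    ∑ j : Fin (d + 1), (v j).card ^ 2 < ∑ u ∈ Finset.Icc 1 (d + 1), (T u).card ^ 2 := by
  obtain ⟨i, j, hij, hji⟩ := hunstable
  obtain ⟨a, hai, haj⟩ := not_subset.mp hij
  obtain ⟨b, hbj, hbi⟩ := not_subset.mp hji
  have hn_le : ∀ c, n c ≤ d + 1 := fun c =>
    hn c ▸ (card_filter_le _ _).trans_eq (card_fin _)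
  calc ∑ j, #(v j) ^ 2
      = ∑ p : C × C, #{k | p.1 ∈ v k ∧ p.2 ∈ v k} :=
        sum_card_sq_eq_sum_card_filter_mem_and_mem v
    _ < ∑ p : C × C, min (n p.1) (n p.2) := by
        simp only [hn]
        exact sum_lt_sum (fun p _ => card_filter_and_le_min _ _ _)
          ⟨(a, b), mem_univ _, card_filter_mem_and_mem_lt_min v hai hbi hbj haj⟩
    _ = ∑ u ∈ Icc 1 (d + 1), #(T u) ^ 2 := by
        simp only [hT, card_sq_filter_le_eq_card_filter_le_min]
        exact (sum_card_filter_le_eq_sum _ _ fun p _ => min_le_of_left_le (hn_le p.1)).symm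
end

section
/- In a stable configuration the singleton value sets all carry the majority choice: let S_1, ..., S_N be finsets over a choice type C that are pairwise comparable under inclusion (a stable collection), and for each choice c let count(c) = |{j : c ∈ S_j}|. Suppose there is a choice c* with count(c*) ≥ 1 and count(c) < count(c*) for every choice c ≠ c*. Then (i) there exists an index j with S_j = {c*}, and (ii) for every index j, if |S_j| = 1 then S_j = {c*}. -/
/-!
Among the members of the stable family that contain `c*`, take one of least size, `S j₀`.
Comparability forces `S j₀` to lie inside every member containing `c*`, so every element of
`S j₀` has at least as many supporters as `c*`; by strict majority, `S j₀ = {c*}`. Any other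
singleton member is comparable with `{c*}`, hence equal to it.
-/

open Finset

theorem Finset.eq_of_comparable_of_card_eq {α : Type*} {s t : Finset α}
    (hst : s ⊆ t ∨ t ⊆ s) (hcard : #s = #t) : s = t := by
  rcases hst with h | h
  · exact eq_of_subset_of_card_le h hcard.ge
  · exact (eq_of_subset_of_card_le h hcard.le).symm

section StableFamily

variable {ι α : Type*} [Fintype ι] [DecidableEq α] {S : ι → Finset α}

def supporters (S : ι → Finset α) (a : α) : Finset ι := univ.filter (a ∈ S ·)

@[simp]
theorem mem_supporters {a : α} {j : ι} : j ∈ supporters S a ↔ a ∈ S j := by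
  simp [supporters]

theorem exists_least_mem_of_comparable (hS : ∀ i j, S i ⊆ S j ∨ S j ⊆ S i) {a : α}
    (ha : (supporters S a).Nonempty) : ∃ i, a ∈ S i ∧ ∀ j, a ∈ S j → S i ⊆ S j := by
  obtain ⟨i, hi, hmin⟩ := (supporters S a).exists_min_image (fun j => #(S j)) ha
  refine ⟨i, mem_supporters.mp hi, fun j hj => ?_⟩
  rcases hS i j with h | h
  · exact h
  · exact (eq_of_subset_of_card_le h (hmin j (mem_supporters.mpr hj))).ge

theorem supporters_subset_of_forall_subset {a b : α} {i : ι}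
    (hleast : ∀ j, a ∈ S j → S i ⊆ S j) (hb : b ∈ S i) :
    supporters S a ⊆ supporters S b := fun j hj =>
  mem_supporters.mpr (hleast j (mem_supporters.mp hj) hb)

theorem eq_singleton_of_least_mem_of_majority {a : α} {i : ι}
    (hmaj : ∀ b, b ≠ a → #(supporters S b) < #(supporters S a))
    (ha : a ∈ S i) (hleast : ∀ j, a ∈ S j → S i ⊆ S j) : S i = {a} := by
  refine eq_singleton_iff_unique_mem.mpr ⟨ha, fun b hb => ?_⟩
  by_contra hba
  exact (card_le_card (supporters_subset_of_forall_subset hleast hb)).not_gt (hmaj b hba)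

end StableFamily

/-- In a stable (pairwise inclusion-comparable) collection
`S 0, …, S (N-1)` of finsets, if the choice `c*` has count at least one and a
strictly larger count than every other choice, then some member equals `{c*}`
and every member of size one equals `{c*}`. -/
theorem stable_singletons_are_majority
    {C : Type*} [DecidableEq C] (N : ℕ)
    (S : Fin N → Finset C)
    (hchain : ∀ i j : Fin N, S i ⊆ S j ∨ S j ⊆ S i)
    (count : C → ℕ)
    (hcount : ∀ c, count c = (Finset.univ.filter (fun j => c ∈ S j)).card)
    (cstar : C)
    (hpos : 1 ≤ count cstar)
    (hmaj : ∀ c : C, c ≠ cstar → count c < count cstar) :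
    (∃ j : Fin N, S j = {cstar}) ∧
    (∀ j : Fin N, (S j).card = 1 → S j = {cstar}) := by
  have hcount' : ∀ c, count c = #(supporters S c) := hcount
  have hmaj' : ∀ c, c ≠ cstar → #(supporters S c) < #(supporters S cstar) := by
    simpa only [hcount'] using hmaj
  have hne : (supporters S cstar).Nonempty := card_pos.mp (hcount' cstar ▸ hpos)
  obtain ⟨j₀, hj₀, hleast⟩ := exists_least_mem_of_comparable hchain hne
  have hsingleton : S j₀ = {cstar} := eq_singleton_of_least_mem_of_majority hmaj' hj₀ hleast
  refine ⟨⟨j₀, hsingleton⟩, fun j hcard => ?_⟩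
  rw [← hsingleton]
  exact eq_of_comparable_of_card_eq (hchain j j₀) (by rw [hcard, hsingleton, card_singleton])
end

section
/- Uniqueness of the stable rearrangement: let S_0, ..., S_d be finsets over a choice type C that are pairwise comparable under inclusion, and for each choice c let n_c = |{j ∈ {0,...,d} : c ∈ S_j}|. Let T_1, ..., T_{d+1} with T_u = {c : n_c ≥ u} be the broadcast redistribution determined by these counts. Then the multiset {S_0, ..., S_d} equals the multiset {T_1, ..., T_{d+1}}. (This underlies the claim in the proof of Theorem 1 that the broadcast result C' is a permutation of the configuration C_r obtained by iterating pairwise DMVR interactions until stability.) -/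
/-! Sort the chain so that it decreases. Then the members containing a choice `c` form an initial
segment of the indices, of length `n c`, so the `k`-th member (counting from `0`) is
`{c | k < n c} = T (k + 1)`. -/

open Finset

theorem Fin.mem_iff_lt_card_of_isLowerSet {m : ℕ} {A : Finset (Fin m)}
    (hA : IsLowerSet (A : Set (Fin m))) (k : Fin m) : k ∈ A ↔ (k : ℕ) < #A := by
  constructor
  · intro hk
    simpa using card_le_card (fun j hj => hA (mem_Iic.mp hj) hk : Iic k ⊆ A)
  · intro hk
    by_contra hkA
    have hA_lt : A ⊆ Iio k := fun j hj => mem_Iio.mpr (lt_of_not_ge fun hkj => hkA (hA hkj hj))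
    simpa using hk.trans_le (card_le_card hA_lt)

theorem Fin.univ_val_map_add_one {α : Type*} (m : ℕ) (f : ℕ → α) :
    univ.val.map (fun k : Fin m => f (k + 1)) = (Icc 1 m).val.map f := by
  have hIcc :
      Icc 1 m = (univ : Finset (Fin m)).map (Fin.valEmbedding.trans (addRightEmbedding 1)) := by
    rw [← map_map, Fin.map_valEmbedding_univ, Nat.Iio_eq_range, range_eq_Ico, map_add_right_Ico,
      Ico_add_one_right_eq_Icc]
  rw [hIcc, map_val, Multiset.map_map]
  rfl

theorem Antitone.mem_iff_lt_card_filter_mem {C : Type*} [DecidableEq C] {m : ℕ}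
    {S : Fin m → Finset C} (hS : Antitone S) (c : C) (k : Fin m) :
    c ∈ S k ↔ (k : ℕ) < #{j | c ∈ S j} := by
  rw [← Fin.mem_iff_lt_card_of_isLowerSet, mem_filter, and_iff_right (mem_univ k)]
  intro i j hij hj
  simp only [coe_filter, mem_univ, true_and, Set.mem_ofPred_eq] at hj ⊢
  exact hS hij hj

theorem Finset.exists_perm_antitone_of_total {C : Type*} {m : ℕ} (S : Fin m → Finset C)
    (hS : ∀ i j, S i ⊆ S j ∨ S j ⊆ S i) : ∃ σ : Equiv.Perm (Fin m), Antitone (S ∘ σ) := by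
  let σ := Fin.revPerm.trans (Tuple.sort fun k => #(S k))
  have hcard : Antitone fun k => #(S (σ k)) :=
    (Tuple.monotone_sort fun k => #(S k)).comp_antitone Fin.rev_anti
  refine ⟨σ, fun i j hij => ?_⟩
  rcases hS (σ i) (σ j) with h | h
  · exact (eq_of_subset_of_card_le h (hcard hij)).ge
  · exact h

/-- Uniqueness of the stable rearrangement: if `S 0, …, S d` are
pairwise comparable under inclusion and `T u = {c : n c ≥ u}` is the broadcast
redistribution determined by their counts `n c`, then the multiset
`{S 0, …, S d}` equals the multiset `{T 1, …, T (d+1)}`. -/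
theorem stable_rearrangement_unique
    {C : Type*} [Fintype C] [DecidableEq C] (d : ℕ)
    (S : Fin (d + 1) → Finset C)
    (hchain : ∀ i j : Fin (d + 1), S i ⊆ S j ∨ S j ⊆ S i)
    (n : C → ℕ)
    (hn : ∀ c, n c = (Finset.univ.filter (fun j => c ∈ S j)).card)
    (T : ℕ → Finset C)
    (hT : ∀ u, T u = Finset.univ.filter (fun c => u ≤ n c)) :
    (Finset.univ.val.map (fun j : Fin (d + 1) => S j)) =
      ((Finset.Icc 1 (d + 1)).val.map T) := by
  obtain ⟨σ, hσ⟩ := exists_perm_antitone_of_total S hchain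
  have hcount (c : C) : #{j | c ∈ S (σ j)} = n c := by
    rw [hn]
    exact card_equiv σ (by simp)
  calc univ.val.map S
      = univ.val.map (S ∘ σ) := by rw [← Multiset.map_map, Multiset.map_univ_val_equiv]
    _ = univ.val.map (fun k : Fin (d + 1) => T (k + 1)) := by
      refine Multiset.map_congr rfl fun k _ => ?_
      ext c
      rw [hT, mem_filter, ← hcount, Order.add_one_le_iff]
      simpa using hσ.mem_iff_lt_card_filter_mem c k
    _ = (Icc 1 (d + 1)).val.map T := Fin.univ_val_map_add_one (d + 1) T
end

section
/- Explicit solution of the mean-field ODE for the first phase: let a > 0 and 0 < x₀ < y₀ be real numbers, set Δ = y₀ − x₀, and define x : ℝ → ℝ by x(t) = Δ / ((y₀/x₀)·exp(a·Δ·t) − 1). Then x(0) = x₀, and for every t ≥ 0 the function x has derivative x'(t) = −a · x(t) · (x(t) + Δ) at t (i.e., x solves dx/dt = −a·x·(x + y₀ − x₀)). -/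
open Real

/-- Writing `D = c·e^{aΔs} - 1`, one has `D' = aΔ(D + 1)` and `x(x + Δ) = Δ²(D + 1)/D²`
for `x = Δ/D`, so `x' = -ΔD'/D² = -a·x·(x + Δ)`. -/
theorem hasDerivAt_div_mul_exp_sub_one (a Δ c t : ℝ) (hD : c * exp (a * Δ * t) - 1 ≠ 0) :
    HasDerivAt (fun s => Δ / (c * exp (a * Δ * s) - 1))
      (-a * (Δ / (c * exp (a * Δ * t) - 1)) * (Δ / (c * exp (a * Δ * t) - 1) + Δ)) t := by
  have hexp : HasDerivAt (fun s => exp (a * Δ * s)) (exp (a * Δ * t) * (a * Δ)) t :=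
    ((hasDerivAt_id t).const_mul (a * Δ)).exp.congr_deriv (by simp)
  refine ((hasDerivAt_const t Δ).div ((hexp.const_mul c).sub_const 1) hD).congr_deriv ?_
  field_simp
  ring

/-- Explicit solution of the mean-field ODE of the first phase:
`x t = (y₀ − x₀) / ((y₀/x₀)·exp(a(y₀−x₀)t) − 1)` satisfies `x 0 = x₀` and solves
`dx/dt = −a·x·(x + y₀ − x₀)` at every `t ≥ 0`. -/
theorem first_phase_ode_solution
    (a x₀ y₀ : ℝ) (ha : 0 < a) (hx₀ : 0 < x₀) (hxy : x₀ < y₀)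
    (x : ℝ → ℝ)
    (hx : ∀ t : ℝ, x t =
      (y₀ - x₀) / ((y₀ / x₀) * Real.exp (a * (y₀ - x₀) * t) - 1)) :
    x 0 = x₀ ∧
    ∀ t : ℝ, 0 ≤ t → HasDerivAt x (-a * x t * (x t + (y₀ - x₀))) t := by
  have hratio : 1 < y₀ / x₀ := (one_lt_div hx₀).2 hxy
  obtain rfl : x = fun t => (y₀ - x₀) / ((y₀ / x₀) * exp (a * (y₀ - x₀) * t) - 1) := funext hx
  refine ⟨?_, fun t ht => ?_⟩
  · have hne : y₀ - x₀ ≠ 0 := sub_ne_zero.2 hxy.ne'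
    simp only [mul_zero, exp_zero, mul_one]
    field_simp
  · have hexp : 1 ≤ exp (a * (y₀ - x₀) * t) := by
      have := sub_pos.2 hxy
      exact one_le_exp (by positivity)
    exact hasDerivAt_div_mul_exp_sub_one a (y₀ - x₀) (y₀ / x₀) t
      (sub_ne_zero.2 (one_lt_mul_of_lt_of_le hratio hexp).ne')
end

section
/- First-phase time bound (equation (13)): let n > 0, d > 0 and 0 < ρ₁ < ρ₂ be real numbers, set a = d(d+1)/n², x₀ = n·ρ₁, y₀ = n·ρ₂, Δ = n·(ρ₂ − ρ₁), and define x(t) = Δ / ((ρ₂/ρ₁)·exp(a·Δ·t) − 1). Then for every t ≥ 0 with t ≥ (n / (d(d+1)(ρ₂ − ρ₁))) · ( ln(ρ₁/ρ₂) + ln(n(ρ₂ − ρ₁) + 1) ), one has x(t) ≤ 1. -/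
/-!
With `k = d(d+1)/n² · Δ`, the bound `x(t) ≤ 1` amounts to `(ρ₂/ρ₁)·e^{kt} ≥ Δ + 1`, i.e. to
`log(ρ₁/ρ₂) + log(Δ + 1) ≤ kt`, and the threshold in the statement is exactly this with
`1/k = n / (d(d+1)(ρ₂ − ρ₁))`.
-/

open Real

lemma le_div_mul_exp_of_log_add_log_le {p q c s : ℝ} (hp : 0 < p) (hq : 0 < q) (hc : 0 < c)
    (h : log (p / q) + log c ≤ s) : c ≤ q / p * exp s := by
  have hexp : exp (log (p / q) + log c) = p / q * c := by
    rw [exp_add, exp_log (by positivity), exp_log hc]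
  calc c = q / p * (p / q * c) := by field_simp
    _ = q / p * exp (log (p / q) + log c) := by rw [hexp]
    _ ≤ q / p * exp s := by gcongr

lemma div_mul_exp_sub_one_le_one {Δ p q k t : ℝ} (hΔ : 0 < Δ) (hp : 0 < p) (hq : 0 < q)
    (hk : 0 < k) (ht : k⁻¹ * (log (p / q) + log (Δ + 1)) ≤ t) :
    Δ / (q / p * exp (k * t) - 1) ≤ 1 := by
  have hlog : log (p / q) + log (Δ + 1) ≤ k * t := (inv_mul_le_iff₀ hk).mp ht
  have hden : Δ + 1 ≤ q / p * exp (k * t) :=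
    le_div_mul_exp_of_log_add_log_le hp hq (by linarith) hlog
  exact div_le_one_of_le₀ (by linarith) (by linarith)

/-- First-phase time bound (equation (13)): with
`x t = n(ρ₂−ρ₁) / ((ρ₂/ρ₁)·exp((d(d+1)/n²)·n(ρ₂−ρ₁)·t) − 1)`, for every `t ≥ 0`
beyond `n/(d(d+1)(ρ₂−ρ₁)) · (ln(ρ₁/ρ₂) + ln(n(ρ₂−ρ₁)+1))` one has `x t ≤ 1`. -/
theorem first_phase_time_bound
    (n d ρ₁ ρ₂ : ℝ) (hn : 0 < n) (hd : 0 < d) (hρ₁ : 0 < ρ₁) (hρ : ρ₁ < ρ₂)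
    (x : ℝ → ℝ)
    (hx : ∀ t : ℝ, x t =
      n * (ρ₂ - ρ₁) /
        ((ρ₂ / ρ₁) * Real.exp ((d * (d + 1) / n ^ 2) * (n * (ρ₂ - ρ₁)) * t) - 1)) :
    ∀ t : ℝ, 0 ≤ t →
      (n / (d * (d + 1) * (ρ₂ - ρ₁))) *
          (Real.log (ρ₁ / ρ₂) + Real.log (n * (ρ₂ - ρ₁) + 1)) ≤ t →
      x t ≤ 1 := by
  intro t _ ht
  have hgap : 0 < ρ₂ - ρ₁ := sub_pos.mpr hρ
  have hrate : n / (d * (d + 1) * (ρ₂ - ρ₁)) = (d * (d + 1) / n ^ 2 * (n * (ρ₂ - ρ₁)))⁻¹ := by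
    field_simp
  rw [hrate] at ht
  rw [hx t]
  exact div_mul_exp_sub_one_le_one (by positivity) hρ₁ (hρ₁.trans hρ) (by positivity) ht
end

section
/- Two-sided bound justifying the binomial-expansion approximation (equations (9)–(10)): for every natural number m ≥ 1 and all real numbers a, b with 0 ≤ a, 0 ≤ b and a + b ≤ 1, one has 1 − m(m−1)·a·b ≤ (1 − a)^m + (1 − b)^m − (1 − a − b)^m ≤ 1. -/
/-!
Write `P m = (1 - a)^m + (1 - b)^m - (1 - a - b)^m`, so `P 0 = 1`. Going from `m` to `m + 1`
draws lowers `P` by exactly `a((1-a)^m - (1-a-b)^m) + b((1-b)^m - (1-a-b)^m)`, and since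
`t ↦ t^m` is monotone and `m`-Lipschitz on `[0, 1]`, this drop lies between `0` and `2mab`.
Summing the drops over `m` draws gives `0 ≤ 1 - P m ≤ m(m-1)ab`.
-/

open Finset

section Ring

variable {R : Type*} [CommRing R]

/-- The probability that `m` independent draws miss `{c₁}` or miss `{c₂}`, where `a` and `b`
are the probabilities of drawing `{c₁}` and `{c₂}`. -/
def missingColorProb (a b : R) (m : ℕ) : R :=
  (1 - a) ^ m + (1 - b) ^ m - (1 - a - b) ^ m

theorem missingColorProb_zero (a b : R) : missingColorProb a b 0 = 1 := by
  simp [missingColorProb]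

theorem missingColorProb_sub_succ (a b : R) (k : ℕ) :
    missingColorProb a b k - missingColorProb a b (k + 1) =
      a * ((1 - a) ^ k - (1 - a - b) ^ k) + b * ((1 - b) ^ k - (1 - a - b) ^ k) := by
  simp only [missingColorProb]
  ring

theorem sum_range_two_mul_natCast (m : ℕ) :
    ∑ k ∈ range m, (2 * k : R) = m * (m - 1) := by
  induction m with
  | zero => simp
  | succ m ih =>
    rw [sum_range_succ, ih]
    push_cast
    ring

end Ring

section OrderedRing

variable {R : Type*} [CommRing R] [LinearOrder R] [IsStrictOrderedRing R]

theorem pow_sub_pow_le_natCast_mul_abs_sub {x y : R} (hx : |x| ≤ 1) (hy : |y| ≤ 1) (n : ℕ) :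
    x ^ n - y ^ n ≤ n * |x - y| := by
  have hmax : max |x| |y| ^ (n - 1) ≤ 1 :=
    pow_le_one₀ (le_max_of_le_left (abs_nonneg x)) (max_le hx hy)
  calc x ^ n - y ^ n ≤ |x ^ n - y ^ n| := le_abs_self _
    _ ≤ |x - y| * n * max |x| |y| ^ (n - 1) := abs_pow_sub_pow_le ..
    _ ≤ |x - y| * n := mul_le_of_le_one_right (by positivity) hmax
    _ = n * |x - y| := mul_comm _ _

theorem pow_sub_pow_mem_Icc {x y : R} (hy : 0 ≤ y) (hyx : y ≤ x) (hx : x ≤ 1) (n : ℕ) :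
    x ^ n - y ^ n ∈ Set.Icc 0 (n * (x - y)) := by
  refine ⟨sub_nonneg.2 (pow_le_pow_left₀ hy hyx n), ?_⟩
  have habs : ∀ {t : R}, 0 ≤ t → t ≤ 1 → |t| ≤ 1 := fun h0 h1 ↦ abs_le.2 ⟨by linarith, h1⟩
  simpa [abs_of_nonneg (sub_nonneg.2 hyx)] using
    pow_sub_pow_le_natCast_mul_abs_sub (habs (hy.trans hyx) hx) (habs hy (hyx.trans hx)) n

theorem missingColorProb_sub_succ_mem_Icc {a b : R} (ha : 0 ≤ a) (hb : 0 ≤ b) (hab : a + b ≤ 1)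
    (k : ℕ) :
    missingColorProb a b k - missingColorProb a b (k + 1) ∈ Set.Icc 0 (2 * k * a * b) := by
  have hc : 0 ≤ 1 - a - b := by linarith
  obtain ⟨hA0, hA⟩ := pow_sub_pow_mem_Icc hc (by linarith : 1 - a - b ≤ 1 - a) (by linarith) k
  obtain ⟨hB0, hB⟩ := pow_sub_pow_mem_Icc hc (by linarith : 1 - a - b ≤ 1 - b) (by linarith) k
  rw [missingColorProb_sub_succ]
  refine ⟨add_nonneg (mul_nonneg ha hA0) (mul_nonneg hb hB0), ?_⟩
  calc a * ((1 - a) ^ k - (1 - a - b) ^ k) + b * ((1 - b) ^ k - (1 - a - b) ^ k)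
      ≤ a * (k * (1 - a - (1 - a - b))) + b * (k * (1 - b - (1 - a - b))) := by gcongr
    _ = 2 * k * a * b := by ring

theorem one_sub_missingColorProb_mem_Icc {a b : R} (ha : 0 ≤ a) (hb : 0 ≤ b) (hab : a + b ≤ 1)
    (m : ℕ) : 1 - missingColorProb a b m ∈ Set.Icc 0 (m * (m - 1) * a * b) := by
  have hdrop := missingColorProb_sub_succ_mem_Icc ha hb hab
  have htelescope : 1 - missingColorProb a b m =
      ∑ k ∈ range m, (missingColorProb a b k - missingColorProb a b (k + 1)) := by
    rw [sum_range_sub', missingColorProb_zero]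
  rw [htelescope]
  refine ⟨sum_nonneg fun k _ ↦ (hdrop k).1, ?_⟩
  calc ∑ k ∈ range m, (missingColorProb a b k - missingColorProb a b (k + 1))
      ≤ ∑ k ∈ range m, 2 * (k : R) * a * b := sum_le_sum fun k _ ↦ (hdrop k).2
    _ = m * (m - 1) * a * b := by rw [← sum_mul, ← sum_mul, sum_range_two_mul_natCast]

end OrderedRing

theorem binomial_expansion_two_sided_bound_general
    (m : ℕ) (a b : ℝ) (ha : 0 ≤ a) (hb : 0 ≤ b) (hab : a + b ≤ 1) :
    1 - (m : ℝ) * ((m : ℝ) - 1) * a * b ≤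
      (1 - a) ^ m + (1 - b) ^ m - (1 - a - b) ^ m ∧
    (1 - a) ^ m + (1 - b) ^ m - (1 - a - b) ^ m ≤ 1 := by
  obtain ⟨hlower, hupper⟩ := one_sub_missingColorProb_mem_Icc ha hb hab m
  simp only [missingColorProb] at hlower hupper
  constructor <;> linarith

/-- Two-sided bound justifying the binomial-expansion approximation
(equations (9)–(10)): for `m ≥ 1` and `0 ≤ a`, `0 ≤ b`, `a + b ≤ 1`,
`1 − m(m−1)ab ≤ (1−a)^m + (1−b)^m − (1−a−b)^m ≤ 1`. -/
theorem binomial_expansion_two_sided_bound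
    (m : ℕ) (hm : 1 ≤ m) (a b : ℝ) (ha : 0 ≤ a) (hb : 0 ≤ b) (hab : a + b ≤ 1) :
    1 - (m : ℝ) * ((m : ℝ) - 1) * a * b ≤
      (1 - a) ^ m + (1 - b) ^ m - (1 - a - b) ^ m ∧
    (1 - a) ^ m + (1 - b) ^ m - (1 - a - b) ^ m ≤ 1 :=
  binomial_expansion_two_sided_bound_general m a b ha hb hab
end
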